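/- arXiv:2410.13543 — 7 statements merged into one kernel-verified Lean document; each statement's English description precedes it below -/
import Mathlib

section
/- If φ : 2^V → ℝ is a function on subsets of a finite set V, then its UpMin transform χ, defined by χ(I) = min over K ⊇ I of φ(K), is nondecreasing (i.e., J ⊆ I implies χ(J) ≤ χ(I)). Moreover, if φ is submodular with φ(∅) = 0 and nonnegative, then χ is also submodular with χ(∅) = 0 and nonnegative. -/
/-!
The minimum over supersets is attained: pick `K₁ ⊇ I₁` and `K₂ ⊇ I₂` with `UpMin φ Iᵢ = φ Kᵢ`.
Then `K₁ ∪ K₂ ⊇ I₁ ∪ I₂` and `K₁ ∩ K₂ ⊇ I₁ ∩ I₂` compete in the minima defining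
`UpMin φ (I₁ ∪ I₂)` and `UpMin φ (I₁ ∩ I₂)`, so submodularity of `φ` at `K₁, K₂` gives
submodularity of `UpMin φ` at `I₁, I₂`.
-/

open Finset

/-- The UpMin transform of a function on subsets of a finite set `V`:
`UpMin φ I = min_{K ⊇ I} φ K`. -/
noncomputable def UpMin {V : Type*} [Fintype V] [DecidableEq V]
    (φ : Finset V → ℝ) (I : Finset V) : ℝ :=
  ((Finset.univ : Finset (Finset V)).filter fun K => I ⊆ K).inf'
    ⟨Finset.univ, by simp⟩ φ

section

variable {V : Type*} [Fintype V] [DecidableEq V] (φ : Finset V → ℝ)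

theorem upMin_le_iff {a : ℝ} {I : Finset V} : a ≤ UpMin φ I ↔ ∀ K, I ⊆ K → a ≤ φ K :=
  (le_inf'_iff _ _).trans (by simp)

theorem upMin_le_of_subset {I K : Finset V} (h : I ⊆ K) : UpMin φ I ≤ φ K :=
  inf'_le _ (by simp [h])

theorem exists_superset_upMin_eq (I : Finset V) : ∃ K, I ⊆ K ∧ UpMin φ I = φ K := by
  obtain ⟨K, hK, hEq⟩ := exists_mem_eq_inf' (s := univ.filter fun K => I ⊆ K) ⟨univ, by simp⟩ φ
  exact ⟨K, by simpa using hK, hEq⟩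

theorem upMin_mono {J I : Finset V} (h : J ⊆ I) : UpMin φ J ≤ UpMin φ I :=
  (upMin_le_iff φ).2 fun _ hIK => upMin_le_of_subset φ (h.trans hIK)

variable {φ}

theorem upMin_nonneg (hφ : ∀ K, 0 ≤ φ K) (I : Finset V) : 0 ≤ UpMin φ I :=
  (upMin_le_iff φ).2 fun K _ => hφ K

theorem upMin_empty (h₀ : φ ∅ = 0) (hφ : ∀ K, 0 ≤ φ K) : UpMin φ ∅ = 0 :=
  le_antisymm (h₀ ▸ upMin_le_of_subset φ (empty_subset ∅)) (upMin_nonneg hφ ∅)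

theorem upMin_union_add_upMin_inter_le
    (hsub : ∀ K₁ K₂ : Finset V, φ (K₁ ∪ K₂) + φ (K₁ ∩ K₂) ≤ φ K₁ + φ K₂) (I₁ I₂ : Finset V) :
    UpMin φ (I₁ ∪ I₂) + UpMin φ (I₁ ∩ I₂) ≤ UpMin φ I₁ + UpMin φ I₂ := by
  obtain ⟨K₁, h₁, e₁⟩ := exists_superset_upMin_eq φ I₁
  obtain ⟨K₂, h₂, e₂⟩ := exists_superset_upMin_eq φ I₂
  calc UpMin φ (I₁ ∪ I₂) + UpMin φ (I₁ ∩ I₂)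
      ≤ φ (K₁ ∪ K₂) + φ (K₁ ∩ K₂) :=
        add_le_add (upMin_le_of_subset φ (union_subset_union h₁ h₂))
          (upMin_le_of_subset φ (inter_subset_inter h₁ h₂))
    _ ≤ φ K₁ + φ K₂ := hsub K₁ K₂
    _ = UpMin φ I₁ + UpMin φ I₂ := by rw [e₁, e₂]

end

theorem upMin_nondecreasing_and_submodular_general
    {V : Type*} [Fintype V] [DecidableEq V] (φ : Finset V → ℝ) :
    (∀ J I : Finset V, J ⊆ I → UpMin φ J ≤ UpMin φ I) ∧
    ((φ ∅ = 0 ∧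
        (∀ I₁ I₂ : Finset V, φ (I₁ ∪ I₂) + φ (I₁ ∩ I₂) ≤ φ I₁ + φ I₂) ∧
        (∀ I : Finset V, 0 ≤ φ I)) →
      (UpMin φ ∅ = 0 ∧
        (∀ I₁ I₂ : Finset V,
          UpMin φ (I₁ ∪ I₂) + UpMin φ (I₁ ∩ I₂) ≤ UpMin φ I₁ + UpMin φ I₂) ∧
        (∀ I : Finset V, 0 ≤ UpMin φ I))) :=
  ⟨fun _ _ => upMin_mono φ, fun ⟨h₀, hsub, hφ⟩ =>
    ⟨upMin_empty h₀ hφ, upMin_union_add_upMin_inter_le hsub, upMin_nonneg hφ⟩⟩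

/-- The UpMin transform is nondecreasing; and if `φ` is submodular (with `φ ∅ = 0`)
and nonnegative, then so is its UpMin transform. -/
theorem upMin_nondecreasing_and_submodular
    {V : Type*} [Fintype V] [DecidableEq V] [Nonempty V] (φ : Finset V → ℝ) :
    (∀ J I : Finset V, J ⊆ I → UpMin φ J ≤ UpMin φ I) ∧
    ((φ ∅ = 0 ∧
        (∀ I₁ I₂ : Finset V, φ (I₁ ∪ I₂) + φ (I₁ ∩ I₂) ≤ φ I₁ + φ I₂) ∧
        (∀ I : Finset V, 0 ≤ φ I)) →
      (UpMin φ ∅ = 0 ∧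
        (∀ I₁ I₂ : Finset V,
          UpMin φ (I₁ ∪ I₂) + UpMin φ (I₁ ∩ I₂) ≤ UpMin φ I₁ + UpMin φ I₂) ∧
        (∀ I : Finset V, 0 ≤ UpMin φ I))) :=
  upMin_nondecreasing_and_submodular_general φ
end

section
/- Let φ : 2^V → ℤ be a nonnegative integer-valued submodular function and J ⊆ V a nonempty subset. Then φ + ξ_J ≥ 0 (pointwise) if and only if there exists v ∈ J such that φ + ξ_v ≥ 0, where ξ_S(I) = -1 if S ⊆ I and 0 otherwise, and ξ_v := ξ_{{v}}. -/
open Finset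

/-- The function `ξ_S : 2^V → ℤ`, equal to `-1` on supersets of `S` and `0` elsewhere. -/
def xiJ {V : Type*} [DecidableEq V] (S I : Finset V) : ℤ :=
  if S ⊆ I then -1 else 0

/-!
Since `φ ≥ 0`, the condition `φ + ξ_S ≥ 0` says exactly that `φ` does not vanish on any superset
of `S`. For a nonnegative submodular `φ` the zero sets are closed under union, so if every
`v ∈ J` lies in some zero set, the union of these is a zero set containing `J`.
-/

section Submodular

variable {V : Type*} [DecidableEq V] {φ : Finset V → ℤ}

lemma supClosed_setOf_eq_zero
    (hsub : ∀ I₁ I₂ : Finset V, φ (I₁ ∪ I₂) + φ (I₁ ∩ I₂) ≤ φ I₁ + φ I₂)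
    (hnn : ∀ I : Finset V, 0 ≤ φ I) :
    SupClosed {I | φ I = 0} := fun I₁ (h₁ : φ I₁ = 0) I₂ (h₂ : φ I₂ = 0) =>
  show φ (I₁ ∪ I₂) = 0 by linarith [hsub I₁ I₂, hnn (I₁ ∩ I₂), hnn (I₁ ∪ I₂)]

lemma exists_superset_eq_zero
    (hsub : ∀ I₁ I₂ : Finset V, φ (I₁ ∪ I₂) + φ (I₁ ∩ I₂) ≤ φ I₁ + φ I₂)
    (hnn : ∀ I : Finset V, 0 ≤ φ I) {J : Finset V} (hJ : J.Nonempty)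
    (h : ∀ v ∈ J, ∃ I, v ∈ I ∧ φ I = 0) :
    ∃ I, J ⊆ I ∧ φ I = 0 := by
  choose I hvI hI using h
  refine ⟨J.attach.sup fun v => I v v.2, fun v hv => ?_, ?_⟩
  · exact mem_sup.mpr ⟨⟨v, hv⟩, mem_attach _ _, hvI v hv⟩
  · exact (supClosed_setOf_eq_zero hsub hnn).finsetSup_mem (attach_nonempty_iff.mpr hJ)
      fun v _ => hI v v.2

lemma add_xiJ_nonneg_iff (hnn : ∀ I : Finset V, 0 ≤ φ I) (S : Finset V) :
    (∀ I, 0 ≤ φ I + xiJ S I) ↔ ∀ I, S ⊆ I → φ I ≠ 0 := by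
  refine forall_congr' fun I => ?_
  by_cases hSI : S ⊆ I
  · simp only [xiJ, hSI, if_true, true_implies]
    have := hnn I
    omega
  · simp [xiJ, hSI, hnn I]

end Submodular

theorem phi_add_xiJ_nonneg_iff_general
    {V : Type*} [DecidableEq V]
    (φ : Finset V → ℤ)
    (hsub : ∀ I₁ I₂ : Finset V, φ (I₁ ∪ I₂) + φ (I₁ ∩ I₂) ≤ φ I₁ + φ I₂)
    (hnn : ∀ I : Finset V, 0 ≤ φ I)
    (J : Finset V) (hJ : J.Nonempty) :
    (∀ I : Finset V, 0 ≤ φ I + xiJ J I) ↔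
      ∃ v ∈ J, ∀ I : Finset V, 0 ≤ φ I + xiJ {v} I := by
  simp only [add_xiJ_nonneg_iff hnn, singleton_subset_iff]
  constructor
  · intro h
    by_contra! hzero
    obtain ⟨I, hJI, hI⟩ := exists_superset_eq_zero hsub hnn hJ hzero
    exact h I hJI hI
  · rintro ⟨v, hv, h⟩ I hJI
    exact h I (hJI hv)

/-- For a nonnegative integer-valued submodular `φ` and a nonempty `J ⊆ V`:
`φ + ξ_J ≥ 0` pointwise iff there is `v ∈ J` with `φ + ξ_{{v}} ≥ 0` pointwise. -/
theorem phi_add_xiJ_nonneg_iff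
    {V : Type*} [Fintype V] [DecidableEq V]
    (φ : Finset V → ℤ)
    (h0 : φ ∅ = 0)
    (hsub : ∀ I₁ I₂ : Finset V, φ (I₁ ∪ I₂) + φ (I₁ ∩ I₂) ≤ φ I₁ + φ I₂)
    (hnn : ∀ I : Finset V, 0 ≤ φ I)
    (J : Finset V) (hJ : J.Nonempty) :
    (∀ I : Finset V, 0 ≤ φ I + xiJ J I) ↔
      ∃ v ∈ J, ∀ I : Finset V, 0 ≤ φ I + xiJ {v} I :=
  phi_add_xiJ_nonneg_iff_general φ hsub hnn J hJ
end

section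
/- Let φ : 2^V → ℝ be nonnegative submodular. If UpMin(φ) is simple, then φ is simple. Conversely, if φ is positive (φ(I) > 0 for all nonempty proper I ⊂ V) with positive range φ(V) > 0 and simple, then UpMin(φ) is simple. -/
/-!
`UpMin φ ≤ φ` with equality at `V`, so simplicity passes from `UpMin φ` down to `φ`. Conversely,
write `UpMin φ I = φ K` and `UpMin φ (V \ I) = φ L` with `I ⊆ K`, `V \ I ⊆ L`, so that
`K ∪ L = V`. If `K` and `L` are complementary, simplicity of `φ` applies; otherwise submodularity
gives `φ V + φ (K ∩ L) ≤ φ K + φ L` with `K ∩ L` nonempty, and positivity of `φ` makes the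
inequality strict.
-/

open Finset

section

variable {V : Type*} [Fintype V] [DecidableEq V] (φ : Finset V → ℝ)

def IsSimple : Prop :=
  ∀ I : Finset V, I.Nonempty → I ≠ univ → φ univ < φ I + φ (univ \ I)

theorem upMin_le_self (I : Finset V) : UpMin φ I ≤ φ I :=
  upMin_le_of_subset φ subset_rfl

theorem upMin_univ : UpMin φ univ = φ univ :=
  le_antisymm (upMin_le_self φ univ) <| le_inf' _ _ fun K hK => by
    rw [univ_subset_iff.mp (mem_filter.mp hK).2]

variable {φ}

theorem IsSimple.of_upMin (h : IsSimple (UpMin φ)) : IsSimple φ := fun I hI hIV =>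
  calc φ univ = UpMin φ univ := (upMin_univ φ).symm
    _ < UpMin φ I + UpMin φ (univ \ I) := h I hI hIV
    _ ≤ φ I + φ (univ \ I) := add_le_add (upMin_le_self φ I) (upMin_le_self φ _)

theorem IsSimple.lt_add_of_union_eq_univ
    (hsub : ∀ I₁ I₂ : Finset V, φ (I₁ ∪ I₂) + φ (I₁ ∩ I₂) ≤ φ I₁ + φ I₂)
    (hpos : ∀ I : Finset V, I.Nonempty → I ≠ univ → 0 < φ I) (hV : 0 < φ univ)
    (hφ : IsSimple φ) {K L : Finset V} (hK : K.Nonempty) (hL : L.Nonempty)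
    (hKL : K ∪ L = univ) : φ univ < φ K + φ L := by
  have hsubKL := hsub K L
  rw [hKL] at hsubKL
  rcases (K ∩ L).eq_empty_or_nonempty with hdisj | hmeet
  · have hcompl : IsCompl K L :=
      ⟨disjoint_iff_inter_eq_empty.mpr hdisj, codisjoint_iff.mpr hKL⟩
    have hKV : K ≠ univ := fun h => hL.ne_empty (by simpa [h] using hcompl.compl_eq.symm)
    simpa [← compl_eq_univ_sdiff, hcompl.compl_eq] using hφ K hK hKV
  · by_cases hmeetV : K ∩ L = univ
    · have hKV : K = univ := univ_subset_iff.mp (hmeetV ▸ inter_subset_left)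
      have hLV : L = univ := univ_subset_iff.mp (hmeetV ▸ inter_subset_right)
      rw [hKV, hLV]
      linarith
    · linarith [hpos _ hmeet hmeetV]

theorem IsSimple.upMin
    (hsub : ∀ I₁ I₂ : Finset V, φ (I₁ ∪ I₂) + φ (I₁ ∩ I₂) ≤ φ I₁ + φ I₂)
    (hpos : ∀ I : Finset V, I.Nonempty → I ≠ univ → 0 < φ I) (hV : 0 < φ univ)
    (hφ : IsSimple φ) : IsSimple (UpMin φ) := by
  intro I hI hIV
  obtain ⟨K, hIK, hK⟩ := exists_superset_upMin_eq φ I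
  obtain ⟨L, hIL, hL⟩ := exists_superset_upMin_eq φ (univ \ I)
  have hIc : (univ \ I).Nonempty := sdiff_nonempty.mpr fun h => hIV (univ_subset_iff.mp h)
  have hKL : K ∪ L = univ :=
    univ_subset_iff.mp fun v _ => by
      by_cases hv : v ∈ I
      · exact mem_union_left L (hIK hv)
      · exact mem_union_right K (hIL (by simp [hv]))
  rw [upMin_univ, hK, hL]
  exact hφ.lt_add_of_union_eq_univ hsub hpos hV (hI.mono hIK) (hIc.mono hIL) hKL

end

theorem simple_upMin_general
    {V : Type*} [Fintype V] [DecidableEq V]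
    (φ : Finset V → ℝ)
    (hsub : ∀ I₁ I₂ : Finset V, φ (I₁ ∪ I₂) + φ (I₁ ∩ I₂) ≤ φ I₁ + φ I₂) :
    ((∀ I : Finset V, I.Nonempty → I ≠ Finset.univ →
        UpMin φ Finset.univ < UpMin φ I + UpMin φ (Finset.univ \ I)) →
      ∀ I : Finset V, I.Nonempty → I ≠ Finset.univ →
        φ Finset.univ < φ I + φ (Finset.univ \ I)) ∧
    (((∀ I : Finset V, I.Nonempty → I ≠ Finset.univ → 0 < φ I) ∧
        0 < φ Finset.univ ∧
        (∀ I : Finset V, I.Nonempty → I ≠ Finset.univ →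
          φ Finset.univ < φ I + φ (Finset.univ \ I))) →
      ∀ I : Finset V, I.Nonempty → I ≠ Finset.univ →
        UpMin φ Finset.univ < UpMin φ I + UpMin φ (Finset.univ \ I)) :=
  ⟨IsSimple.of_upMin, fun ⟨hpos, hV, hφ⟩ => IsSimple.upMin hsub hpos hV hφ⟩

/-- For nonnegative submodular `φ`: if `UpMin φ` is simple then `φ` is simple;
conversely, if `φ` is positive with positive range and simple, then `UpMin φ` is simple.
Here `ψ` is simple if `ψ(I) + ψ(V∖I) > ψ(V)` for every nonempty proper `I ⊂ V`. -/
theorem simple_upMin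
    {V : Type*} [Fintype V] [DecidableEq V]
    (φ : Finset V → ℝ)
    (h0 : φ ∅ = 0)
    (hsub : ∀ I₁ I₂ : Finset V, φ (I₁ ∪ I₂) + φ (I₁ ∩ I₂) ≤ φ I₁ + φ I₂)
    (hnn : ∀ I : Finset V, 0 ≤ φ I)
    (hcard : 2 ≤ Fintype.card V) :
    ((∀ I : Finset V, I.Nonempty → I ≠ Finset.univ →
        UpMin φ Finset.univ < UpMin φ I + UpMin φ (Finset.univ \ I)) →
      ∀ I : Finset V, I.Nonempty → I ≠ Finset.univ →
        φ Finset.univ < φ I + φ (Finset.univ \ I)) ∧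
    (((∀ I : Finset V, I.Nonempty → I ≠ Finset.univ → 0 < φ I) ∧
        0 < φ Finset.univ ∧
        (∀ I : Finset V, I.Nonempty → I ≠ Finset.univ →
          φ Finset.univ < φ I + φ (Finset.univ \ I))) →
      ∀ I : Finset V, I.Nonempty → I ≠ Finset.univ →
        UpMin φ Finset.univ < UpMin φ I + UpMin φ (Finset.univ \ I)) :=
  simple_upMin_general φ hsub
end

section
/- Let G be a finite graph with arrow set 𝔼 (each edge gives two opposite arrows), and let s : 𝔼 → ℤ be a slope function, i.e., s(a) + s(ā) ∈ {−1, 0} for every arrow a. Define A_s as the set of arrows a with s(ā) < 0, and ζ_s(I) := |A_s(I^c, I)| + Σ_{a ∈ 𝔼(I, I^c)} s(a), where 𝔼(I, I^c) denotes the arrows with tail in I and head in I^c and A_s(I^c, I) = 𝔼(I^c, I) ∩ A_s. Then ζ_s is submodular. -/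
open Finset

/-- The submodular function `ζ_s` associated to a slope function `s` on the arrows of a
graph: `ζ_s(I) = |A_s(Iᶜ, I)| + ∑_{a ∈ 𝔼(I, Iᶜ)} s(a)`, where `A_s` is the set of arrows
`a` with `s(ā) < 0`. -/
def zetaFn {V E : Type*} [Fintype V] [DecidableEq V] [Fintype E]
    (rev : E → E) (tl hd : E → V) (s : E → ℤ) (I : Finset V) : ℤ :=
  ((Finset.univ.filter fun a => s (rev a) < 0 ∧ tl a ∉ I ∧ hd a ∈ I).card : ℤ) +
    ∑ a ∈ Finset.univ.filter fun a => tl a ∈ I ∧ hd a ∉ I, s a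

lemma zetaFn_eq {V E : Type*} [Fintype V] [DecidableEq V] [Fintype E]
    (rev : E → E) (tl hd : E → V) (s : E → ℤ) (I : Finset V) :
    zetaFn rev tl hd s I =
      ∑ a : E, ((if s (rev a) < 0 ∧ tl a ∉ I ∧ hd a ∈ I then (1 : ℤ) else 0) +
        (if tl a ∈ I ∧ hd a ∉ I then s a else 0)) := by
  unfold zetaFn
  rw [Finset.sum_add_distrib, Finset.sum_filter, Finset.card_filter]
  push_cast
  ring

lemma sum_pair_le {E : Type*} [Fintype E] (rev : E → E)
    (hrev : Function.Involutive rev)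
    (L R : E → ℤ) (h : ∀ a, L a + L (rev a) ≤ R a + R (rev a)) :
    ∑ a, L a ≤ ∑ a, R a := by
  have hL : ∑ a, L (rev a) = ∑ a, L a := by
    simpa using Equiv.sum_comp hrev.toPerm L
  have hR : ∑ a, R (rev a) = ∑ a, R a := by
    simpa using Equiv.sum_comp hrev.toPerm R
  have hsum := Finset.sum_le_sum (fun a (_ : a ∈ Finset.univ) => h a)
  rw [Finset.sum_add_distrib, Finset.sum_add_distrib, hL, hR] at hsum
  linarith

/-- For a slope function `s` (i.e. `s(a) + s(ā) ∈ {-1, 0}` for every arrow `a`) on a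
finite graph whose arrow set `E` carries the edge-reversal involution `rev`,
the function `ζ_s` is submodular. -/
theorem zeta_submodular
    {V E : Type*} [Fintype V] [DecidableEq V] [Fintype E]
    (rev : E → E) (tl hd : E → V)
    (hrev : ∀ a, rev (rev a) = a)
    (hswap : ∀ a, tl (rev a) = hd a)
    (hfree : ∀ a, rev a ≠ a)
    (s : E → ℤ)
    (hs : ∀ a, s a + s (rev a) = -1 ∨ s a + s (rev a) = 0) :
    zetaFn rev tl hd s (∅ : Finset V) = 0 ∧
      ∀ I₁ I₂ : Finset V,
        zetaFn rev tl hd s (I₁ ∪ I₂) + zetaFn rev tl hd s (I₁ ∩ I₂) ≤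
          zetaFn rev tl hd s I₁ + zetaFn rev tl hd s I₂ := by
  have hdrev : ∀ a, hd (rev a) = tl a := by
    intro a
    have := hswap (rev a)
    rwa [hrev, eq_comm] at this
  constructor
  · simp [zetaFn]
  · intro I₁ I₂
    rw [zetaFn_eq, zetaFn_eq, zetaFn_eq, zetaFn_eq, ← Finset.sum_add_distrib,
      ← Finset.sum_add_distrib]
    apply sum_pair_le rev hrev
    intro a
    simp only [hrev, hswap, hdrev, Finset.mem_union, Finset.mem_inter]
    rcases hs a with h | h <;>
      by_cases h1 : tl a ∈ I₁ <;> by_cases h2 : tl a ∈ I₂ <;>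
      by_cases h3 : hd a ∈ I₁ <;> by_cases h4 : hd a ∈ I₂ <;>
      simp only [h1, h2, h3, h4, true_and, and_true, false_and, and_false, true_or,
        or_true, false_or, or_false, not_true, not_false_iff, if_true, if_false,
        not_true_eq_false, not_false_eq_true, if_pos, if_neg] <;>
      first
        | omega
        | (split_ifs <;> omega)
end

section
/- Subintegrability lemma: Let G = (V, E) be a finite connected graph with arrow set 𝔼, and x : 𝔼 → ℝ ∪ {−∞} a function with x(a) + x(ā) ≤ 0 for every arrow a and Σ_{a ∈ z} x(a) ≤ 0 for every directed circuit z in G. Then there exists h : V → ℝ such that x(a) ≤ h(u) − h(v) for every arrow a = u→v, with equality if and only if either x(a) + x(ā) = 0 or there exists a directed circuit z containing a with Σ_{b ∈ z} x(b) = 0. -/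
open Finset

/-- A (directed, elementary) circuit in a graph given by tail/head maps: a nonempty list of
arrows with pairwise distinct tails, each head equal to the next tail, and the last head
equal to the first tail. -/
def IsCircuit {V E : Type*} (tl hd : E → V) (z : List E) : Prop :=
  z ≠ [] ∧ (z.map tl).Nodup ∧
    List.Chain' (fun a b => hd a = tl b) z ∧
    ∀ a ∈ z.getLast?, ∀ b ∈ z.head?, hd a = tl b

/-!
Replace each `-∞` by a real `-L` so negative that every circuit through it is negative,
then raise all arrows that lie on no zero circuit by a small `ε > 0`; since there are only
finitely many circuits, all of them stay nonpositive. For real weights with nonpositive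
circuits, the largest weight of a path to a root is a potential `h` with
`y a ≤ h (tl a) - h (hd a)`: prepending `a` to a path either gives a path or closes a
circuit. Along a zero circuit the slacks `h (tl a) - h (hd a) - y a` are nonnegative and
telescope to zero, so they all vanish, while the perturbed arrows are strictly slack.
A pair `x a + x ā = 0` is itself a zero circuit `[a, ā]` (or a zero loop).
-/

section Walks

variable {V E : Type*} {tl hd : E → V}

variable (tl hd) in
inductive IsWalk : V → V → List E → Prop
  | nil (u : V) : IsWalk u u []
  | cons (a : E) {v : V} {z : List E} : IsWalk (hd a) v z → IsWalk (tl a) v (a :: z)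

variable (tl hd) in
def IsPath (u v : V) (p : List E) : Prop :=
  IsWalk tl hd u v p ∧ (p.map tl).Nodup

variable (tl hd) in
def OnZeroCircuit {M : Type*} [AddMonoid M] (w : E → M) (a : E) : Prop :=
  ∃ z : List E, IsCircuit tl hd z ∧ a ∈ z ∧ (z.map w).sum = 0

theorem isWalk_nil_iff {u v : V} : IsWalk tl hd u v [] ↔ u = v :=
  ⟨fun h => by cases h; rfl, fun h => h ▸ .nil u⟩

theorem isWalk_cons_iff {u v : V} {a : E} {z : List E} :
    IsWalk tl hd u v (a :: z) ↔ tl a = u ∧ IsWalk tl hd (hd a) v z :=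
  ⟨fun h => by cases h with | cons _ h => exact ⟨rfl, h⟩, fun ⟨h₁, h₂⟩ => h₁ ▸ .cons a h₂⟩

theorem IsWalk.of_append_cons {u v : V} {A C : List E} {c : E}
    (h : IsWalk tl hd u v (A ++ c :: C)) :
    IsWalk tl hd u (tl c) A ∧ IsWalk tl hd (tl c) v (c :: C) := by
  induction A generalizing u with
  | nil => obtain ⟨rfl, _⟩ := isWalk_cons_iff.1 h; exact ⟨.nil _, h⟩
  | cons a A ih =>
    rw [List.cons_append, isWalk_cons_iff] at h
    obtain ⟨rfl, h⟩ := h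
    exact ⟨.cons a (ih h).1, (ih h).2⟩

theorem IsWalk.sum_map_sub {G : Type*} [AddCommGroup G] (h : V → G) {u v : V} {z : List E}
    (hz : IsWalk tl hd u v z) : (z.map fun a => h (tl a) - h (hd a)).sum = h u - h v := by
  induction hz with
  | nil => simp
  | cons a _ ih => simp [ih]

theorem isWalk_iff_isChain {u v : V} {z : List E} (hz : z ≠ []) :
    IsWalk tl hd u v z ↔ z.IsChain (fun a b => hd a = tl b) ∧
      (∀ a ∈ z.head?, tl a = u) ∧ ∀ a ∈ z.getLast?, hd a = v := by
  induction z generalizing u with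
  | nil => exact absurd rfl hz
  | cons a t ih =>
    cases t with
    | nil => simp [isWalk_cons_iff, isWalk_nil_iff]
    | cons b t =>
      rw [isWalk_cons_iff, ih (List.cons_ne_nil b t), List.isChain_cons_cons,
        List.getLast?_cons_cons]
      simp only [List.head?_cons, Option.mem_def, Option.some.injEq, forall_eq']
      tauto

theorem isCircuit_iff_isPath {z : List E} :
    IsCircuit tl hd z ↔ z ≠ [] ∧ ∃ u, IsPath tl hd u u z := by
  unfold IsCircuit IsPath
  constructor
  · rintro ⟨hz, hnd, hchain, hclose⟩
    obtain ⟨a, t, rfl⟩ := List.exists_cons_of_ne_nil hz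
    refine ⟨hz, tl a, (isWalk_iff_isChain hz).2 ⟨hchain, by simp, ?_⟩, hnd⟩
    exact fun b hb => hclose b hb a rfl
  · rintro ⟨hz, u, hwalk, hnd⟩
    obtain ⟨hchain, hhead, hlast⟩ := (isWalk_iff_isChain hz).1 hwalk
    exact ⟨hz, hnd, hchain, fun a ha b hb => (hlast a ha).trans (hhead b hb).symm⟩

theorem IsCircuit.nodup {z : List E} (hz : IsCircuit tl hd z) : z.Nodup :=
  hz.2.1.of_map tl

theorem exists_isPath {u v : V}
    (huv : Relation.ReflTransGen (fun p q => ∃ a : E, tl a = p ∧ hd a = q) u v) :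
    ∃ p, IsPath tl hd u v p := by
  induction huv using Relation.ReflTransGen.head_induction_on with
  | refl => exact ⟨[], .nil _, List.nodup_nil⟩
  | head step _ ih =>
    obtain ⟨a, rfl, rfl⟩ := step
    obtain ⟨p, hwalk, hnd⟩ := ih
    by_cases ha : tl a ∈ p.map tl
    · obtain ⟨c, hc, hca⟩ := List.mem_map.1 ha
      obtain ⟨A, C, rfl⟩ := List.append_of_mem hc
      rw [List.map_append, List.nodup_append] at hnd
      exact ⟨c :: C, hca ▸ hwalk.of_append_cons.2, hnd.2.1⟩
    · exact ⟨a :: p, .cons a hwalk, List.nodup_cons.2 ⟨ha, hnd⟩⟩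

end Walks

section Potential

open Topology

variable {V E : Type*} {tl hd : E → V}

theorem List.finite_setOf_nodup {α : Type*} [Finite α] : {l : List α | l.Nodup}.Finite := by
  have := Fintype.ofFinite α
  exact Set.finite_coe_iff.mp (inferInstanceAs (Finite {l : List α // l.Nodup}))

theorem IsPath.exists_isPath_add_sum_le {y : E → ℝ}
    (hcirc : ∀ z, IsCircuit tl hd z → (z.map y).sum ≤ 0) {a : E} {v : V} {p : List E}
    (hp : IsPath tl hd (hd a) v p) :
    ∃ q, IsPath tl hd (tl a) v q ∧ y a + (p.map y).sum ≤ (q.map y).sum := by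
  obtain ⟨hwalk, hnd⟩ := hp
  by_cases ha : tl a ∈ p.map tl
  · obtain ⟨c, hc, hca⟩ := List.mem_map.1 ha
    obtain ⟨A, C, rfl⟩ := List.append_of_mem hc
    obtain ⟨hA, hC⟩ := hwalk.of_append_cons
    rw [List.map_append, List.nodup_append] at hnd
    have hcirc_aA : IsCircuit tl hd (a :: A) := by
      refine isCircuit_iff_isPath.2 ⟨List.cons_ne_nil a A, tl a, .cons a (hca ▸ hA), ?_⟩
      exact List.nodup_cons.2 ⟨fun h => hnd.2.2 _ h (tl c) (by simp) hca.symm, hnd.1⟩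
    refine ⟨c :: C, ⟨hca ▸ hC, hnd.2.1⟩, ?_⟩
    have := hcirc _ hcirc_aA
    simp only [List.map_cons, List.sum_cons, List.map_append, List.sum_append] at this ⊢
    linarith
  · exact ⟨a :: p, ⟨.cons a hwalk, List.nodup_cons.2 ⟨ha, hnd⟩⟩, by simp⟩

theorem exists_potential_le [Finite E]
    (hconn : ∀ u v : V, Relation.ReflTransGen (fun p q => ∃ a : E, tl a = p ∧ hd a = q) u v)
    (y : E → ℝ) (hcirc : ∀ z, IsCircuit tl hd z → (z.map y).sum ≤ 0) :
    ∃ h : V → ℝ, ∀ a, y a ≤ h (tl a) - h (hd a) := by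
  cases isEmpty_or_nonempty V
  · exact ⟨0, fun a => isEmptyElim (tl a)⟩
  let r : V := Classical.arbitrary V
  let S : V → Set ℝ := fun u => (fun p => (p.map y).sum) '' {p | IsPath tl hd u r p}
  have hfin (u : V) : (S u).Finite :=
    (List.finite_setOf_nodup.subset fun p hp => hp.2.of_map tl).image _
  have hne (u : V) : (S u).Nonempty := Set.Nonempty.image _ (exists_isPath (hconn u r))
  refine ⟨fun u => sSup (S u), fun a => ?_⟩
  suffices sSup (S (hd a)) ≤ sSup (S (tl a)) - y a by linarith
  refine csSup_le (hne _) ?_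
  rintro _ ⟨p, hp, rfl⟩
  obtain ⟨q, hq, hle⟩ := hp.exists_isPath_add_sum_le hcirc
  have := le_csSup (hfin (tl a)).bddAbove ⟨q, hq, rfl⟩
  linarith

theorem IsCircuit.eq_sub_of_sum_eq_zero {y : E → ℝ} {h : V → ℝ} {z : List E}
    (hz : IsCircuit tl hd z) (hle : ∀ b ∈ z, y b ≤ h (tl b) - h (hd b))
    (hsum : (z.map y).sum = 0) {a : E} (ha : a ∈ z) : y a = h (tl a) - h (hd a) := by
  obtain ⟨-, u, hwalk, -⟩ := isCircuit_iff_isPath.1 hz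
  refine (hle a ha).eq_of_not_lt fun hlt => ?_
  have := List.sum_lt_sum _ _ hle ⟨a, ha, hlt⟩
  rw [hsum, hwalk.sum_map_sub, sub_self] at this
  exact this.false

theorem exists_pos_isCircuit_sum_perturb_nonpos [Finite E] (y : E → ℝ)
    (hcirc : ∀ z, IsCircuit tl hd z → (z.map y).sum ≤ 0) :
    ∃ ε > 0, ∀ z, IsCircuit tl hd z →
      (z.map fun a => y a + ε * {a | OnZeroCircuit tl hd y a}ᶜ.indicator 1 a).sum ≤ 0 := by
  set c := {a | OnZeroCircuit tl hd y a}ᶜ.indicator (1 : E → ℝ)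
  have hfin : {z | IsCircuit tl hd z}.Finite :=
    List.finite_setOf_nodup.subset fun z hz => IsCircuit.nodup hz
  suffices ∀ᶠ ε in 𝓝[>] 0, ∀ z ∈ {z | IsCircuit tl hd z},
      (z.map fun a => y a + ε * c a).sum ≤ 0 from
    (this.and self_mem_nhdsWithin).exists.imp fun ε h => ⟨h.2, h.1⟩
  refine hfin.eventually_all.2 fun z hz => ?_
  rcases (hcirc z hz).lt_or_eq with hneg | hzero
  · have hcont : Continuous fun ε : ℝ => (z.map fun a => y a + ε * c a).sum :=
      continuous_list_sum _ fun a _ => by fun_prop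
    have hlim := hcont.tendsto 0
    simp only [zero_mul, add_zero] at hlim
    exact nhdsWithin_le_nhds ((hlim.eventually (gt_mem_nhds hneg)).mono fun _ h => h.le)
  · refine Filter.Eventually.of_forall fun ε => ?_
    have hc : ∀ a ∈ z, c a = 0 := fun a ha =>
      Set.indicator_of_notMem (not_not.2 ⟨z, hz, ha, hzero⟩) _
    rw [List.map_congr_left fun a ha => by rw [hc a ha, mul_zero, add_zero], hzero]

theorem exists_potential_le_and_eq_iff [Finite E]
    (hconn : ∀ u v : V, Relation.ReflTransGen (fun p q => ∃ a : E, tl a = p ∧ hd a = q) u v)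
    (y : E → ℝ) (hcirc : ∀ z, IsCircuit tl hd z → (z.map y).sum ≤ 0) :
    ∃ h : V → ℝ, ∀ a, y a ≤ h (tl a) - h (hd a) ∧
      (y a = h (tl a) - h (hd a) ↔ OnZeroCircuit tl hd y a) := by
  set T := {a | OnZeroCircuit tl hd y a}
  obtain ⟨ε, hε, hcircε⟩ := exists_pos_isCircuit_sum_perturb_nonpos y hcirc
  obtain ⟨h, hh⟩ := exists_potential_le hconn _ hcircε
  refine ⟨h, fun a => ?_⟩
  by_cases ha : a ∈ T
  · obtain ⟨z, hz, haz, hsum⟩ := ha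
    have hT : ∀ b ∈ z, y b + ε * Tᶜ.indicator 1 b = y b := fun b hb => by
      rw [Set.indicator_of_notMem (not_not.2 ⟨z, hz, hb, hsum⟩), mul_zero, add_zero]
    have htight := hz.eq_sub_of_sum_eq_zero (fun b _ => hh b)
      (by rw [List.map_congr_left hT, hsum]) haz
    rw [hT a haz] at htight
    exact ⟨htight.le, iff_of_true htight ⟨z, hz, haz, hsum⟩⟩
  · have hlt : y a < h (tl a) - h (hd a) := by
      have := hh a
      rw [Set.indicator_of_mem (show a ∈ Tᶜ from ha), Pi.one_apply, mul_one] at this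
      linarith
    exact ⟨hlt.le, iff_of_false hlt.ne ha⟩

end Potential

theorem EReal.coe_list_sum (l : List ℝ) : ((l.sum : ℝ) : EReal) = (l.map (↑)).sum := by
  induction l with
  | nil => simp
  | cons r l ih => simp [ih]

theorem EReal.list_sum_eq_bot_iff {l : List EReal} : l.sum = ⊥ ↔ ⊥ ∈ l := by
  induction l with
  | nil => simp
  | cons r l ih => rw [List.sum_cons, EReal.add_eq_bot_iff, ih, List.mem_cons, eq_comm]

section ReplaceBot

variable {V E : Type*} {tl hd : E → V}

noncomputable def replaceBot (x : E → EReal) (L : ℝ) (a : E) : ℝ :=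
  if x a = ⊥ then -L else (x a).toReal

theorem coe_replaceBot {x : E → EReal} (L : ℝ) {a : E} (htop : x a ≠ ⊤) (hbot : x a ≠ ⊥) :
    (replaceBot x L a : EReal) = x a := by
  rw [replaceBot, if_neg hbot, EReal.coe_toReal htop hbot]

theorem replaceBot_le_abs_toReal {x : E → EReal} {L : ℝ} (hL : 0 ≤ L) (a : E) :
    replaceBot x L a ≤ |(x a).toReal| := by
  unfold replaceBot
  split_ifs
  · linarith [abs_nonneg (x a).toReal]
  · exact le_abs_self _

theorem sum_replaceBot_lt_zero_of_bot_mem [Fintype E] {x : E → EReal} {L : ℝ}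
    (hL : ∑ b, |(x b).toReal| < L) {z : List E} (hz : z.Nodup) {a : E} (ha : a ∈ z)
    (hxa : x a = ⊥) : (z.map (replaceBot x L)).sum < 0 := by
  classical
  obtain ⟨A, B, rfl⟩ := List.append_of_mem ha
  have hAB : (A ++ B).Nodup := hz.sublist ((List.sublist_cons_self a B).append_left A)
  have hL0 : 0 ≤ L := (Finset.sum_nonneg fun b _ => abs_nonneg _).trans hL.le
  have : ((A ++ B).map (replaceBot x L)).sum ≤ ∑ b, |(x b).toReal| :=
    calc ((A ++ B).map (replaceBot x L)).sum
        ≤ ((A ++ B).map fun b => |(x b).toReal|).sum :=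
          List.sum_le_sum fun b _ => replaceBot_le_abs_toReal hL0 b
      _ = ∑ b ∈ (A ++ B).toFinset, |(x b).toReal| := (List.sum_toFinset _ hAB).symm
      _ ≤ ∑ b, |(x b).toReal| := Finset.sum_le_univ_sum_of_nonneg fun b => abs_nonneg _
  simp only [List.map_append, List.sum_append, List.map_cons, List.sum_cons] at this ⊢
  rw [replaceBot, if_pos hxa]
  linarith

theorem sum_eq_coe_sum_replaceBot_or [Fintype E] {x : E → EReal} {L : ℝ}
    (htop : ∀ a, x a ≠ ⊤) (hL : ∑ b, |(x b).toReal| < L) {z : List E} (hz : z.Nodup) :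
    (z.map x).sum = (((z.map (replaceBot x L)).sum : ℝ) : EReal) ∨
      ((z.map x).sum = ⊥ ∧ (z.map (replaceBot x L)).sum < 0) := by
  by_cases hbot : ∃ a ∈ z, x a = ⊥
  · obtain ⟨a, ha, hxa⟩ := hbot
    refine .inr ⟨EReal.list_sum_eq_bot_iff.2 (hxa ▸ List.mem_map_of_mem ha),
      sum_replaceBot_lt_zero_of_bot_mem hL hz ha hxa⟩
  · push Not at hbot
    left
    rw [EReal.coe_list_sum, List.map_map]
    exact congrArg List.sum (List.map_congr_left fun a ha =>
      (coe_replaceBot L (htop a) (hbot a ha)).symm)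

theorem sum_replaceBot_nonpos [Fintype E] {x : E → EReal} {L : ℝ}
    (htop : ∀ a, x a ≠ ⊤) (hL : ∑ b, |(x b).toReal| < L) {z : List E} (hz : z.Nodup)
    (hx : (z.map x).sum ≤ 0) : (z.map (replaceBot x L)).sum ≤ 0 := by
  rcases sum_eq_coe_sum_replaceBot_or htop hL hz with h | ⟨-, h⟩
  · exact EReal.coe_nonpos.1 (h ▸ hx)
  · exact h.le

theorem sum_replaceBot_eq_zero_iff [Fintype E] {x : E → EReal} {L : ℝ}
    (htop : ∀ a, x a ≠ ⊤) (hL : ∑ b, |(x b).toReal| < L) {z : List E} (hz : z.Nodup) :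
    (z.map (replaceBot x L)).sum = 0 ↔ (z.map x).sum = 0 := by
  rcases sum_eq_coe_sum_replaceBot_or htop hL hz with h | ⟨h, hneg⟩
  · rw [h, EReal.coe_eq_zero]
  · rw [h]
    exact iff_of_false hneg.ne (by simp)

theorem onZeroCircuit_replaceBot_iff [Fintype E] {x : E → EReal} {L : ℝ}
    (htop : ∀ a, x a ≠ ⊤) (hL : ∑ b, |(x b).toReal| < L) {a : E} :
    OnZeroCircuit tl hd (replaceBot x L) a ↔ OnZeroCircuit tl hd x a := by
  unfold OnZeroCircuit
  refine exists_congr fun z => and_congr_right fun hz => and_congr_right fun _ => ?_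
  exact sum_replaceBot_eq_zero_iff htop hL hz.nodup

theorem OnZeroCircuit.ne_bot {x : E → EReal} {a : E} (ha : OnZeroCircuit tl hd x a) :
    x a ≠ ⊥ := by
  obtain ⟨z, -, haz, hsum⟩ := ha
  intro hxa
  rw [EReal.list_sum_eq_bot_iff.2 (hxa ▸ List.mem_map_of_mem haz)] at hsum
  exact EReal.bot_ne_zero hsum

end ReplaceBot

theorem onZeroCircuit_of_add_eq_zero {V E M : Type*} {tl hd : E → V} [AddCommMonoid M]
    [PartialOrder M] [IsOrderedAddMonoid M] {w : E → M}
    (hcirc : ∀ z, IsCircuit tl hd z → (z.map w).sum ≤ 0) {a b : E}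
    (htl : tl b = hd a) (hhd : hd b = tl a) (hab : w a + w b = 0) :
    OnZeroCircuit tl hd w a := by
  by_cases hloop : tl a = hd a
  · have hca : IsCircuit tl hd [a] := ⟨by simp, by simp, List.isChain_singleton a, by simp [hloop]⟩
    have hcb : IsCircuit tl hd [b] := ⟨by simp, by simp, List.isChain_singleton b, by simp [htl, hhd, hloop]⟩
    have ha : w a ≤ 0 := by simpa using hcirc _ hca
    have hb : w b ≤ 0 := by simpa using hcirc _ hcb
    have : 0 ≤ w a := hab ▸ (add_le_add_right hb (w a)).trans_eq (add_zero _)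
    exact ⟨[a], hca, List.mem_singleton_self a, by simp [le_antisymm ha this]⟩
  · have hcab : IsCircuit tl hd [a, b] :=
      ⟨by simp, by simp [htl, hloop], List.isChain_pair.2 htl.symm, by simp [hhd]⟩
    exact ⟨[a, b], hcab, by simp, by simpa using hab⟩

theorem subintegrability_general
    {V E : Type*} [Fintype E]
    (rev : E → E) (tl hd : E → V)
    (hrev : ∀ a, rev (rev a) = a)
    (hswap : ∀ a, tl (rev a) = hd a)
    (hconn : ∀ u v : V,
      Relation.ReflTransGen (fun p q => ∃ a : E, tl a = p ∧ hd a = q) u v)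
    (x : E → EReal)
    (hxtop : ∀ a, x a ≠ ⊤)
    (hcirc : ∀ z : List E, IsCircuit tl hd z → (z.map x).sum ≤ 0) :
    ∃ h : V → ℝ, ∀ a : E,
      x a ≤ ((h (tl a) - h (hd a) : ℝ) : EReal) ∧
      (x a = ((h (tl a) - h (hd a) : ℝ) : EReal) ↔
        (x a + x (rev a) = 0 ∨
          ∃ z : List E, IsCircuit tl hd z ∧ a ∈ z ∧ (z.map x).sum = 0)) := by
  have hL : ∑ b, |(x b).toReal| < ∑ b, |(x b).toReal| + 1 := lt_add_one _
  obtain ⟨h, hh⟩ := exists_potential_le_and_eq_iff hconn _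
    fun z hz => sum_replaceBot_nonpos hxtop hL hz.nodup (hcirc z hz)
  refine ⟨h, fun a => ?_⟩
  have hpair : x a + x (rev a) = 0 → OnZeroCircuit tl hd x a :=
    onZeroCircuit_of_add_eq_zero hcirc (hswap a) (by rw [← hswap (rev a), hrev])
  change _ ∧ (_ ↔ _ ∨ OnZeroCircuit tl hd x a)
  rw [show _ ∨ OnZeroCircuit tl hd x a ↔ OnZeroCircuit tl hd x a from
    ⟨fun h => h.elim hpair id, .inr⟩]
  by_cases hbot : x a = ⊥
  · rw [hbot]
    exact ⟨bot_le, iff_of_false (EReal.bot_ne_coe _) fun ha => ha.ne_bot hbot⟩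
  · obtain ⟨hle, heq⟩ := hh a
    rw [← coe_replaceBot _ (hxtop a) hbot, EReal.coe_le_coe_iff, EReal.coe_eq_coe_iff, heq,
      onZeroCircuit_replaceBot_iff hxtop hL]
    exact ⟨hle, Iff.rfl⟩

/-- Subintegrability lemma: on a finite connected graph, if `x : 𝔼 → ℝ ∪ {-∞}` satisfies
`x(a) + x(ā) ≤ 0` for every arrow and has nonpositive sum along every circuit, then there
is `h : V → ℝ` with `x(a) ≤ h(tail a) - h(head a)` for every arrow `a`, with equality iff
`x(a) + x(ā) = 0` or `a` lies on a circuit along which the sum of `x` is `0`. -/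
theorem subintegrability
    {V E : Type*} [Fintype V] [Fintype E]
    (rev : E → E) (tl hd : E → V)
    (hrev : ∀ a, rev (rev a) = a)
    (hswap : ∀ a, tl (rev a) = hd a)
    (hfree : ∀ a, rev a ≠ a)
    (hconn : ∀ u v : V,
      Relation.ReflTransGen (fun p q => ∃ a : E, tl a = p ∧ hd a = q) u v)
    (x : E → EReal)
    (hxtop : ∀ a, x a ≠ ⊤)
    (hpair : ∀ a, x a + x (rev a) ≤ 0)
    (hcirc : ∀ z : List E, IsCircuit tl hd z → (z.map x).sum ≤ 0) :
    ∃ h : V → ℝ, ∀ a : E,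
      x a ≤ ((h (tl a) - h (hd a) : ℝ) : EReal) ∧
      (x a = ((h (tl a) - h (hd a) : ℝ) : EReal) ↔
        (x a + x (rev a) = 0 ∨
          ∃ z : List E, IsCircuit tl hd z ∧ a ∈ z ∧ (z.map x).sum = 0)) :=
  subintegrability_general rev tl hd hrev hswap hconn x hxtop hcirc
end

section
/- Let k be a field, V a finite set, U_v finite-dimensional k-vector spaces, U = ⊕ U_v, W ⊆ U a subspace, and J ⊆ V with π_J(W) ≠ 0. Let H ⊂ U_J = ⊕_{v∈J} U_v be a hyperplane. For I ⊆ V set Z_I^{I∪J} := π_{I∪J→J}( π_{I∪J}(W) ∩ ker(π_{I∪J→I}) ) ⊆ U_J. Then the following are equivalent: (1) the submodular function of W ∩ π_J^{-1}(H) equals I ↦ min( ν*_W(I), ν*_W(I∪J) − 1 ); (2) for every I ⊆ V with Z_I^{I∪J} ≠ 0 one has Z_I^{I∪J} ⊄ H. -/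
open Finset

section auxHelpers

open Module Submodule

variable {k : Type*} [Field k]

private lemma hyp_finrank_map_add_finrank_inf_ker {X Y : Type*} [AddCommGroup X] [Module k X]
    [AddCommGroup Y] [Module k Y] [FiniteDimensional k X]
    (f : X →ₗ[k] Y) (M : Submodule k X) :
    finrank k (M.map f) + finrank k ↥(M ⊓ LinearMap.ker f) = finrank k M := by
  have h := LinearMap.finrank_range_add_finrank_ker (f.domRestrict M)
  rw [LinearMap.range_domRestrict, LinearMap.ker_domRestrict] at h
  have e1 : (LinearMap.ker f).comap M.subtype = (M ⊓ LinearMap.ker f).comap M.subtype := by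
    simp [Submodule.comap_inf, Submodule.comap_subtype_self]
  have e2 : finrank k ((LinearMap.ker f).comap M.subtype)
      = finrank k ↥(M ⊓ LinearMap.ker f) := by
    rw [e1]; exact (Submodule.comapSubtypeEquivOfLe inf_le_left).finrank_eq
  omega

private lemma hyp_coatom_quot_finrank {X : Type*} [AddCommGroup X] [Module k X]
    [FiniteDimensional k X] {H : Submodule k X} (hH : IsCoatom H) : finrank k (X ⧸ H) = 1 :=
  isSimpleModule_iff_finrank_eq_one.mp (isSimpleModule_iff_isCoatom.mpr hH)

private lemma hyp_finrank_inf_comap_coatom {X Y : Type*} [AddCommGroup X] [Module k X]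
    [AddCommGroup Y] [Module k Y] [FiniteDimensional k X] [FiniteDimensional k Y]
    (f : Y →ₗ[k] X) {H : Submodule k X} (hH : IsCoatom H)
    (M : Submodule k Y) (hM : ¬ M.map f ≤ H) :
    finrank k ↥(M ⊓ Submodule.comap f H) + 1 = finrank k M := by
  have hq : finrank k (X ⧸ H) = 1 := hyp_coatom_quot_finrank hH
  have hker : LinearMap.ker (H.mkQ.comp f) = Submodule.comap f H := by
    rw [LinearMap.ker_comp, Submodule.ker_mkQ]
  have h4 := hyp_finrank_map_add_finrank_inf_ker (H.mkQ.comp f) M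
  rw [hker] at h4
  have hne : M.map (H.mkQ.comp f) ≠ ⊥ := by
    intro h0
    apply hM
    have hle : M.map f ≤ LinearMap.ker H.mkQ := by
      rintro x ⟨y, hy, rfl⟩
      have hmem : (H.mkQ.comp f) y ∈ M.map (H.mkQ.comp f) := Submodule.mem_map_of_mem hy
      rw [h0] at hmem
      simpa [LinearMap.mem_ker] using hmem
    rwa [Submodule.ker_mkQ] at hle
  have h1 : finrank k (M.map (H.mkQ.comp f)) = 1 := by
    refine le_antisymm (hq ▸ Submodule.finrank_le _) ?_
    have := (Submodule.finrank_eq_zero (R := k)).not.mpr hne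
    omega
  omega

end auxHelpers

/-- Projection `⊕_{v ∈ V} U_v → ⊕_{v ∈ I} U_v`. -/
noncomputable def projTo (k : Type*) [Field k] {V : Type*} [Fintype V] [DecidableEq V]
    (U : V → Type*) [∀ v, AddCommGroup (U v)] [∀ v, Module k (U v)]
    (I : Finset V) : ((v : V) → U v) →ₗ[k] ((v : I) → U v) :=
  LinearMap.pi fun v => LinearMap.proj (v : V)

/-- Restriction `⊕_{v ∈ S} U_v → ⊕_{v ∈ T} U_v` for `T ⊆ S`. -/
noncomputable def restrTo (k : Type*) [Field k] {V : Type*} [Fintype V] [DecidableEq V]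
    (U : V → Type*) [∀ v, AddCommGroup (U v)] [∀ v, Module k (U v)]
    {S T : Finset V} (h : T ⊆ S) : ((v : S) → U v) →ₗ[k] ((v : T) → U v) :=
  LinearMap.pi fun v => LinearMap.proj (⟨(v : V), h v.2⟩ : S)

/-- The subspace `Z_I^{I∪J} = π_{I∪J → J}( π_{I∪J}(W) ∩ ker(π_{I∪J → I}) ) ⊆ U_J`. -/
noncomputable def ZSub (k : Type*) [Field k] {V : Type*} [Fintype V] [DecidableEq V]
    (U : V → Type*) [∀ v, AddCommGroup (U v)] [∀ v, Module k (U v)]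
    (W : Submodule k ((v : V) → U v)) (I J : Finset V) :
    Submodule k ((v : J) → U v) :=
  ((W.map (projTo k U (I ∪ J))) ⊓
      LinearMap.ker (restrTo k U (Finset.subset_union_left : I ⊆ I ∪ J))).map
    (restrTo k U (Finset.subset_union_right : J ⊆ I ∪ J))

section projHelpers

open Module

variable (k : Type*) [Field k] {V : Type*} [Fintype V] [DecidableEq V]
    (U : V → Type*) [∀ v, AddCommGroup (U v)] [∀ v, Module k (U v)]

private lemma projTo_factor {S T : Finset V} (h : T ⊆ S) :
    projTo k U T = (restrTo k U h).comp (projTo k U S) := rfl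

private lemma map_projTo_eq (W : Submodule k ((v : V) → U v)) {S T : Finset V} (h : T ⊆ S) :
    W.map (projTo k U T) = (W.map (projTo k U S)).map (restrTo k U h) := by
  rw [projTo_factor k U h, Submodule.map_comp]

private lemma ker_restr_disjoint (I J : Finset V) :
    LinearMap.ker (restrTo k U (Finset.subset_union_left : I ⊆ I ∪ J)) ⊓
      LinearMap.ker (restrTo k U (Finset.subset_union_right : J ⊆ I ∪ J)) = ⊥ := by
  refine le_antisymm ?_ bot_le
  rintro x hx
  obtain ⟨h1, h2⟩ := Submodule.mem_inf.mp hx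
  rw [LinearMap.mem_ker] at h1 h2
  rw [Submodule.mem_bot]
  funext v
  rcases Finset.mem_union.mp v.2 with hv | hv
  · exact congrFun h1 ⟨v.1, hv⟩
  · exact congrFun h2 ⟨v.1, hv⟩

private lemma map_inf_comap_proj (W : Submodule k ((v : V) → U v)) {S J : Finset V} (h : J ⊆ S)
    (H : Submodule k ((v : J) → U v)) :
    (W ⊓ Submodule.comap (projTo k U J) H).map (projTo k U S)
      = W.map (projTo k U S) ⊓ Submodule.comap (restrTo k U h) H := by
  rw [projTo_factor k U h, Submodule.comap_comp]
  exact (Submodule.map_inf_eq_map_inf_comap).symm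

private lemma ZSub_empty (W : Submodule k ((v : V) → U v)) (J : Finset V) :
    ZSub k U W ∅ J = W.map (projTo k U J) := by
  unfold ZSub
  have hker : LinearMap.ker
      (restrTo k U (Finset.subset_union_left : ∅ ⊆ ∅ ∪ J)) = ⊤ :=
    LinearMap.ker_eq_top.mpr (LinearMap.ext fun x => funext fun v =>
      absurd v.2 (Finset.notMem_empty _))
  rw [hker, inf_top_eq, ← map_projTo_eq]

variable [∀ v, FiniteDimensional k (U v)]

private lemma caseA_numbers (W : Submodule k ((v : V) → U v)) (J : Finset V)
    (H : Submodule k ((v : J) → U v)) (hH : IsCoatom H)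
    (hA : ¬ W.map (projTo k U J) ≤ H) (I : Finset V) :
    finrank k ((W ⊓ Submodule.comap (projTo k U J) H).map (projTo k U I))
        + finrank k ↥(ZSub k U W I J ⊓ H) + 1
      = finrank k (W.map (projTo k U (I ∪ J))) ∧
    finrank k (W.map (projTo k U I)) + finrank k (ZSub k U W I J)
      = finrank k (W.map (projTo k U (I ∪ J))) := by
  set M := W.map (projTo k U (I ∪ J)) with hM
  set rI := restrTo k U (Finset.subset_union_left : I ⊆ I ∪ J) with hrI
  set rJ := restrTo k U (Finset.subset_union_right : J ⊆ I ∪ J) with hrJ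
  set N := M ⊓ LinearMap.ker rI with hN
  have hZdef : ZSub k U W I J = N.map rJ := rfl
  have hMJ : M.map rJ = W.map (projTo k U J) := (map_projTo_eq k U W _).symm
  have hMI : M.map rI = W.map (projTo k U I) := (map_projTo_eq k U W _).symm
  -- second equation
  have e2 := hyp_finrank_map_add_finrank_inf_ker rI M
  rw [hMI, ← hN] at e2
  have hNJbot : N ⊓ LinearMap.ker rJ = ⊥ :=
    le_antisymm (le_trans (inf_le_inf_right _ inf_le_right)
      (ker_restr_disjoint k U I J).le) bot_le
  have hzN : finrank k (ZSub k U W I J) = finrank k N := by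
    have := hyp_finrank_map_add_finrank_inf_ker rJ N
    rw [hNJbot, finrank_bot, ← hZdef] at this
    omega
  -- Z ⊓ H
  have hZH : ZSub k U W I J ⊓ H = (N ⊓ Submodule.comap rJ H).map rJ := by
    rw [hZdef]; exact Submodule.map_inf_eq_map_inf_comap
  have hNHbot : (N ⊓ Submodule.comap rJ H) ⊓ LinearMap.ker rJ = ⊥ :=
    le_antisymm (le_trans (inf_le_inf_right _ inf_le_left) hNJbot.le) bot_le
  have hwN : finrank k ↥(ZSub k U W I J ⊓ H) = finrank k ↥(N ⊓ Submodule.comap rJ H) := by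
    have := hyp_finrank_map_add_finrank_inf_ker rJ (N ⊓ Submodule.comap rJ H)
    rw [hNHbot, finrank_bot, ← hZH] at this
    omega
  -- M' := M ⊓ comap rJ H
  have hM'rank : finrank k ↥(M ⊓ Submodule.comap rJ H) + 1 = finrank k M := by
    refine hyp_finrank_inf_comap_coatom rJ hH M ?_
    rwa [hMJ]
  -- LHS
  have hLHS : (W ⊓ Submodule.comap (projTo k U J) H).map (projTo k U I)
      = (M ⊓ Submodule.comap rJ H).map rI := by
    rw [map_projTo_eq k U _ (Finset.subset_union_left : I ⊆ I ∪ J),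
      map_inf_comap_proj k U W (Finset.subset_union_right : J ⊆ I ∪ J) H]
  have e1 := hyp_finrank_map_add_finrank_inf_ker rI (M ⊓ Submodule.comap rJ H)
  have hshuffle : (M ⊓ Submodule.comap rJ H) ⊓ LinearMap.ker rI
      = N ⊓ Submodule.comap rJ H := by
    rw [hN, inf_right_comm]
  rw [hshuffle, ← hLHS] at e1
  omega

end projHelpers

open Module in
/-- Hyperplane-cut lemma: for `W ⊆ ⊕ U_v` with `π_J(W) ≠ 0` and a hyperplane
`H ⊂ U_J`, the submodular function of `W ∩ π_J⁻¹(H)` equals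
`I ↦ min(ν*_W(I), ν*_W(I∪J) - 1)` if and only if `Z_I^{I∪J} ⊄ H` for every `I`
with `Z_I^{I∪J} ≠ 0`. -/
theorem hyperplane_cut_submodular_iff
    {k : Type*} [Field k] {V : Type*} [Fintype V] [DecidableEq V]
    (U : V → Type*) [∀ v, AddCommGroup (U v)] [∀ v, Module k (U v)]
    [∀ v, FiniteDimensional k (U v)]
    (W : Submodule k ((v : V) → U v)) (J : Finset V)
    (hWJ : W.map (projTo k U J) ≠ ⊥)
    (H : Submodule k ((v : J) → U v)) (hH : IsCoatom H) :
    (∀ I : Finset V,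
        (Module.finrank k
            ((W ⊓ Submodule.comap (projTo k U J) H).map (projTo k U I)) : ℤ) =
          min (Module.finrank k (W.map (projTo k U I)) : ℤ)
            ((Module.finrank k (W.map (projTo k U (I ∪ J))) : ℤ) - 1)) ↔
    (∀ I : Finset V, ZSub k U W I J ≠ ⊥ → ¬ ZSub k U W I J ≤ H) := by
  constructor
  · intro h1 I hZne hZle
    by_cases hA : W.map (projTo k U J) ≤ H
    · -- degenerate case: contradiction with h1 at univ
      have hWW : W ⊓ Submodule.comap (projTo k U J) H = W :=
        inf_eq_left.mpr (Submodule.map_le_iff_le_comap.mp hA)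
      have huniv : (Finset.univ ∪ J : Finset V) = Finset.univ :=
        Finset.union_eq_left.mpr (Finset.subset_univ J)
      have h := h1 Finset.univ
      rw [hWW, huniv] at h
      rw [min_eq_right (by omega)] at h
      omega
    · obtain ⟨e1, e2⟩ := caseA_numbers k U W J H hH hA I
      have hw : finrank k ↥(ZSub k U W I J ⊓ H) = finrank k (ZSub k U W I J) := by
        rw [inf_eq_left.mpr hZle]
      have hzpos : finrank k (ZSub k U W I J) ≠ 0 :=
        fun h0 => hZne (Submodule.finrank_eq_zero.mp h0)
      have h := h1 I
      rw [min_eq_left (by omega)] at h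
      omega
  · intro h2 I
    have hA : ¬ W.map (projTo k U J) ≤ H := by
      have := h2 ∅
      rw [ZSub_empty] at this
      exact this hWJ
    obtain ⟨e1, e2⟩ := caseA_numbers k U W J H hH hA I
    by_cases hz : ZSub k U W I J = ⊥
    · have hz0 : finrank k (ZSub k U W I J) = 0 := by rw [hz]; exact finrank_bot k _
      have hw0 : finrank k ↥(ZSub k U W I J ⊓ H) = 0 := by
        rw [hz, bot_inf_eq]; exact finrank_bot k _
      rw [min_eq_right (by omega)]
      omega
    · have hnle := h2 I hz
      have hcoatom := hyp_finrank_inf_comap_coatom LinearMap.id hH (ZSub k U W I J)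
        (by rwa [Submodule.map_id])
      rw [Submodule.comap_id] at hcoatom
      have hzpos : finrank k (ZSub k U W I J) ≠ 0 :=
        fun h0 => hz (Submodule.finrank_eq_zero.mp h0)
      rw [min_eq_left (by omega)]
      omega
end

section
/- Let V be a finite set, g ≥ 0 an integer, Δ_g = {q ∈ ℝ^V_{≥0} : Σ_v q(v) = g} the standard simplex of width g. For β ∈ Δ_g define the brick B_β := {q ∈ Δ_g : ⌊β(S)⌋ ≤ q(S) ≤ ⌈β(S)⌉ for all S ⊆ V}, where β(S) = Σ_{v∈S} β(v). Then B_β has dimension |V| − 1 (is full-dimensional in the affine span of Δ_g) if and only if β(S) ∉ ℤ for every nonempty proper subset S ⊂ V. -/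
/-!
The brick lies in the hyperplane `q(V) = g`, whose direction is the kernel of `q ↦ q(V)`, of
dimension `|V| - 1`. If `β(S) = m ∈ ℤ` for a nonempty proper `S`, the floor and ceiling constraints
for `S` collapse to the equation `q(S) = m`, independent of `q(V) = g`, and the dimension drops.
Otherwise `β` satisfies the constraints of every nonempty proper `S` strictly, while those of `∅`
and `V` hold on the whole hyperplane; so `β + ε u` stays in the brick for every direction `u` of
the hyperplane and every small `ε`.
-/

open Finset Filter Topology Module

section CoordSum

variable (K : Type*) {ι : Type*}

def coordSum [CommSemiring K] (S : Finset ι) : Dual K (ι → K) :=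
  ∑ i ∈ S, LinearMap.proj i

@[simp]
lemma coordSum_apply [CommSemiring K] (S : Finset ι) (q : ι → K) :
    coordSum K S q = ∑ i ∈ S, q i := by
  simp [coordSum]

variable [Field K] [Fintype ι]

lemma finrank_ker_coordSum_univ :
    finrank K (LinearMap.ker (coordSum K (univ : Finset ι))) = Fintype.card ι - 1 := by
  classical
  rcases isEmpty_or_nonempty ι with hι | ⟨⟨i⟩⟩
  · rw [Fintype.card_eq_zero]
    exact finrank_zero_of_subsingleton
  · have hne : coordSum K (univ : Finset ι) ≠ 0 := fun h => by
      simpa using LinearMap.congr_fun h (Pi.single i 1)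
    have := Dual.finrank_ker_add_one_of_ne_zero hne
    rw [finrank_fintype_fun_eq_card] at this
    omega

variable {K}

lemma ker_coordSum_univ_inf_lt {S : Finset ι} (hS : S.Nonempty) (hSu : S ≠ univ) :
    LinearMap.ker (coordSum K univ) ⊓ LinearMap.ker (coordSum K S) <
      LinearMap.ker (coordSum K univ) := by
  classical
  obtain ⟨i, hi⟩ := hS
  obtain ⟨j, hj⟩ : ∃ j, j ∉ S := by simpa [eq_univ_iff_forall] using hSu
  refine inf_lt_left.2 fun hle => ?_
  have hmem : Pi.single i (1 : K) - Pi.single j 1 ∈ LinearMap.ker (coordSum K univ) := by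
    simp
  simpa [Finset.sum_sub_distrib, hi, hj] using hle hmem

end CoordSum

lemma vectorSpan_le_ker_of_forall_eq {k E F : Type*} [Ring k] [AddCommGroup E] [Module k E]
    [AddCommGroup F] [Module k F] {s : Set E} (f : E →ₗ[k] F) {c : F}
    (h : ∀ x ∈ s, f x = c) : vectorSpan k s ≤ LinearMap.ker f := by
  rw [vectorSpan_def, Submodule.span_le]
  rintro _ ⟨p, hp, q, hq, rfl⟩
  simp [h p hp, h q hq]

lemma mem_vectorSpan_of_add_smul_mem {k E : Type*} [Field k] [AddCommGroup E] [Module k E]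
    {s : Set E} {x u : E} {ε : k} (hε : ε ≠ 0) (hx : x ∈ s) (hxu : x + ε • u ∈ s) :
    u ∈ vectorSpan k s := by
  have := (vectorSpan k s).smul_mem ε⁻¹ (vsub_mem_vectorSpan k hxu hx)
  rwa [vsub_eq_sub, add_sub_cancel_left, inv_smul_smul₀ hε] at this

lemma mem_Ioo_floor_ceil {R : Type*} [Ring R] [LinearOrder R] [IsStrictOrderedRing R]
    [FloorRing R] {x : R} (hx : ¬∃ n : ℤ, x = n) : x ∈ Set.Ioo (⌊x⌋ : R) ⌈x⌉ := by
  have hx' : x ∉ Set.range Int.cast := fun ⟨n, hn⟩ => hx ⟨n, hn.symm⟩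
  refine ⟨Int.floor_lt_self_iff.2 hx', ?_⟩
  rw [(Int.ceil_eq_floor_add_one_iff_notMem x).2 hx']
  push_cast
  exact Int.lt_floor_add_one x

section Brick

variable {V : Type*} [Fintype V]

def brick (g : ℕ) (β : V → ℝ) : Set (V → ℝ) :=
  {q : V → ℝ | (∀ v, 0 ≤ q v) ∧ (∑ v, q v = g) ∧
    ∀ S : Finset V,
      ((⌊∑ v ∈ S, β v⌋ : ℝ) ≤ ∑ v ∈ S, q v ∧ ∑ v ∈ S, q v ≤ (⌈∑ v ∈ S, β v⌉ : ℝ))}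

variable {g : ℕ} {β : V → ℝ}

lemma self_mem_brick (hβ0 : ∀ v, 0 ≤ β v) (hβsum : ∑ v, β v = g) : β ∈ brick g β :=
  ⟨hβ0, hβsum, fun _ => ⟨Int.floor_le _, Int.le_ceil _⟩⟩

lemma sum_eq_of_mem_brick {q : V → ℝ} (hq : q ∈ brick g β) {S : Finset V} {m : ℤ}
    (hm : ∑ v ∈ S, β v = m) : ∑ v ∈ S, q v = m := by
  have := hq.2.2 S
  rw [hm, Int.floor_intCast, Int.ceil_intCast] at this
  exact le_antisymm this.2 this.1

lemma vectorSpan_brick_le_ker :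
    vectorSpan ℝ (brick g β) ≤ LinearMap.ker (coordSum ℝ univ) :=
  vectorSpan_le_ker_of_forall_eq _ fun _ hq => by simpa using hq.2.1

lemma vectorSpan_brick_lt_ker {S : Finset V} (hS : S.Nonempty) (hSu : S ≠ univ) {m : ℤ}
    (hm : ∑ v ∈ S, β v = m) : vectorSpan ℝ (brick g β) < LinearMap.ker (coordSum ℝ univ) :=
  calc vectorSpan ℝ (brick g β)
      ≤ LinearMap.ker (coordSum ℝ univ) ⊓ LinearMap.ker (coordSum ℝ S) :=
        le_inf vectorSpan_brick_le_ker
          (vectorSpan_le_ker_of_forall_eq _ fun _ hq => by simpa using sum_eq_of_mem_brick hq hm)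
    _ < LinearMap.ker (coordSum ℝ univ) := ker_coordSum_univ_inf_lt hS hSu

lemma eventually_add_smul_mem_brick (hβ0 : ∀ v, 0 ≤ β v) (hβsum : ∑ v, β v = g)
    (hβ : ∀ S : Finset V, S.Nonempty → S ≠ univ → ¬∃ n : ℤ, ∑ v ∈ S, β v = n)
    {u : V → ℝ} (hu : ∑ v, u v = 0) : ∀ᶠ ε in 𝓝 (0 : ℝ), β + ε • u ∈ brick g β := by
  have hsum (ε : ℝ) (S : Finset V) :
      ∑ v ∈ S, (β + ε • u) v = ∑ v ∈ S, β v + ε * ∑ v ∈ S, u v := by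
    simp [Finset.sum_add_distrib, Finset.mul_sum]
  have hbounds : ∀ᶠ ε in 𝓝 (0 : ℝ), ∀ S : Finset V,
      (⌊∑ v ∈ S, β v⌋ : ℝ) ≤ ∑ v ∈ S, (β + ε • u) v ∧
        ∑ v ∈ S, (β + ε • u) v ≤ (⌈∑ v ∈ S, β v⌉ : ℝ) := by
    refine eventually_all.2 fun S => ?_
    simp only [hsum, ← Set.mem_Icc]
    by_cases hS : S.Nonempty ∧ S ≠ univ
    · have hcont : Continuous fun ε : ℝ => ∑ v ∈ S, β v + ε * ∑ v ∈ S, u v := by fun_prop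
      have hlim := hcont.tendsto 0
      simp only [zero_mul, add_zero] at hlim
      exact (hlim.eventually (isOpen_Ioo.mem_nhds (mem_Ioo_floor_ceil (hβ S hS.1 hS.2)))).mono
        fun _ h => Set.Ioo_subset_Icc_self h
    · have hS0 : ∑ v ∈ S, u v = 0 := by
        rcases S.eq_empty_or_nonempty with rfl | hne
        · simp
        · rw [not_and_not_right.1 hS hne, hu]
      refine Eventually.of_forall fun _ => ?_
      rw [hS0, mul_zero, add_zero]
      exact ⟨Int.floor_le _, Int.le_ceil _⟩
  filter_upwards [hbounds] with ε hε
  refine ⟨fun v => ?_, by rw [hsum, hβsum, hu, mul_zero, add_zero], hε⟩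
  -- nonnegativity comes for free from the constraint of `{v}`, as `⌊β v⌋ ≥ 0`
  have hfloor : (0 : ℝ) ≤ ⌊β v⌋ := by exact_mod_cast Int.floor_nonneg.2 (hβ0 v)
  simpa using hfloor.trans (by simpa using (hε {v}).1)

lemma vectorSpan_brick_eq_ker (hβ0 : ∀ v, 0 ≤ β v) (hβsum : ∑ v, β v = g)
    (hβ : ∀ S : Finset V, S.Nonempty → S ≠ univ → ¬∃ n : ℤ, ∑ v ∈ S, β v = n) :
    vectorSpan ℝ (brick g β) = LinearMap.ker (coordSum ℝ univ) := by
  refine le_antisymm vectorSpan_brick_le_ker fun u hu => ?_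
  have hnear := eventually_add_smul_mem_brick hβ0 hβsum hβ (u := u) (by simpa using hu)
  obtain ⟨ε, hε, hmem⟩ :=
    (hnear.filter_mono nhdsWithin_le_nhds |>.and (self_mem_nhdsWithin (s := {0}ᶜ))).exists
  exact mem_vectorSpan_of_add_smul_mem hmem (self_mem_brick hβ0 hβsum) hε

end Brick

theorem brick_fulldimensional_iff_general
    {V : Type*} [Fintype V]
    (g : ℕ) (β : V → ℝ)
    (hβ0 : ∀ v, 0 ≤ β v) (hβsum : ∑ v, β v = g) :
    Module.finrank ℝ (vectorSpan ℝ
        {q : V → ℝ | (∀ v, 0 ≤ q v) ∧ (∑ v, q v = g) ∧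
          ∀ S : Finset V,
            ((⌊∑ v ∈ S, β v⌋ : ℝ) ≤ ∑ v ∈ S, q v ∧
              ∑ v ∈ S, q v ≤ (⌈∑ v ∈ S, β v⌉ : ℝ))}) = Fintype.card V - 1 ↔
      ∀ S : Finset V, S.Nonempty → S ≠ Finset.univ →
        ¬ ∃ n : ℤ, ∑ v ∈ S, β v = (n : ℝ) := by
  change finrank ℝ (vectorSpan ℝ (brick g β)) = _ ↔ _
  rw [← finrank_ker_coordSum_univ ℝ]
  refine ⟨fun hdim S hS hSu ⟨m, hm⟩ => ?_, fun hβ => by rw [vectorSpan_brick_eq_ker hβ0 hβsum hβ]⟩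
  exact (Submodule.finrank_lt_finrank_of_lt (vectorSpan_brick_lt_ker hS hSu hm)).ne hdim

/-- For `β` in the standard simplex `Δ_g ⊂ ℝ^V` (with `|V| ≥ 2`), the brick
`B_β = {q ∈ Δ_g : ⌊β(S)⌋ ≤ q(S) ≤ ⌈β(S)⌉ for all S ⊆ V}` has (affine) dimension
`|V| - 1` if and only if `β(S) ∉ ℤ` for every nonempty proper subset `S ⊂ V`. -/
theorem brick_fulldimensional_iff
    {V : Type*} [Fintype V] [DecidableEq V]
    (hV : 2 ≤ Fintype.card V) (g : ℕ) (β : V → ℝ)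
    (hβ0 : ∀ v, 0 ≤ β v) (hβsum : ∑ v, β v = g) :
    Module.finrank ℝ (vectorSpan ℝ
        {q : V → ℝ | (∀ v, 0 ≤ q v) ∧ (∑ v, q v = g) ∧
          ∀ S : Finset V,
            ((⌊∑ v ∈ S, β v⌋ : ℝ) ≤ ∑ v ∈ S, q v ∧
              ∑ v ∈ S, q v ≤ (⌈∑ v ∈ S, β v⌉ : ℝ))}) = Fintype.card V - 1 ↔
      ∀ S : Finset V, S.Nonempty → S ≠ Finset.univ →
        ¬ ∃ n : ℤ, ∑ v ∈ S, β v = (n : ℝ) :=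
  brick_fulldimensional_iff_general g β hβ0 hβsum
end
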